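/- arXiv:2305.02132 — 2 statements merged into one kernel-verified Lean document; each statement's English description precedes it below -/
import Mathlib

section
/- Let M be an a×b matrix over F_p and let Γ be a (k+1)×a matrix whose entries are independent uniform random elements of F_p. Then with probability at least 1 - (k+1)/p, rank(ΓM) = min(k+1, rank M). -/
/-!
Reveal the rows `γ₀, …, γₖ` of `Γ` one at a time. The row space of `ΓM` gains a dimension
at step `i` unless `γᵢ M` lies in the span `S` of the previous rows `γⱼ M` while `S` is
still a proper subspace of the row space of `M`. Given the previous rows, that happens only
for `γᵢ` in the proper subspace `{γ | γ M ∈ S}` of `F^a`, i.e. for at most a `1/p` fraction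
of the choices. If it never happens, `rank (ΓM) = min (k + 1) (rank M)`, and a union bound
over the `k + 1` steps concludes.
-/

open Module Submodule Finset Matrix

section LinearAlgebra

variable {F V : Type*} [Field F] [AddCommGroup V] [Module F V]

theorem finrank_sup_span_singleton_eq_min [FiniteDimensional F V] {S T : Submodule F V} {x : V}
    {n : ℕ} (hST : S ≤ T) (hxT : x ∈ T) (hS : finrank F S = min n (finrank F T))
    (hxS : x ∈ S → S = T) :
    finrank F (S ⊔ span F {x} : Submodule F V) = min (n + 1) (finrank F T) := by
  by_cases hx : x ∈ S
  · obtain rfl := hxS hx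
    rw [sup_eq_left.mpr ((span_singleton_le_iff_mem x S).mpr hx)]
    omega
  · have hle := finrank_mono (sup_le hST ((span_singleton_le_iff_mem x T).mpr hxT))
    rw [finrank_sup_span_singleton hx] at hle ⊢
    omega

theorem Submodule.card_mul_card_le_card_of_ne_top [Fintype F] [Fintype V] {W : Submodule F V}
    [Fintype W] (hW : W ≠ ⊤) : Fintype.card W * Fintype.card F ≤ Fintype.card V := by
  rw [card_eq_pow_finrank (K := F) (V := W), card_eq_pow_finrank (K := F) (V := V), ← pow_succ]
  exact Nat.pow_le_pow_right Fintype.card_pos (finrank_lt hW)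

end LinearAlgebra

theorem Fin.card_filter_cons {α : Type*} [Fintype α] {n : ℕ} (P : (Fin (n + 1) → α) → Prop)
    [DecidablePred P] :
    #{f | P f} = ∑ g : Fin n → α, #{x | P (Fin.cons x g)} := by
  rw [card_filter, ← (Fin.consEquiv fun _ => α).sum_comp, Fintype.sum_prod_type_right]
  simp only [card_filter]
  rfl

namespace Matrix

variable {F l m o : Type*} [Field F] [Fintype m]

def rowSpace (A : Matrix l o F) : Submodule F (o → F) := span F (Set.range A.row)

theorem rank_eq_finrank_rowSpace [Fintype o] [Fintype l] (A : Matrix l o F) :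
    A.rank = finrank F A.rowSpace :=
  rank_eq_finrank_span_row A

theorem rowSpace_mul (A : Matrix l m F) (M : Matrix m o F) :
    (A * M).rowSpace = A.rowSpace.map M.vecMulLinear := by
  rw [rowSpace, rowSpace, map_span, ← Set.range_comp]
  rfl

theorem rowSpace_eq_range_vecMulLinear (M : Matrix m o F) :
    M.rowSpace = LinearMap.range M.vecMulLinear :=
  (range_vecMulLinear M).symm

theorem rowSpace_mul_le (A : Matrix l m F) (M : Matrix m o F) :
    (A * M).rowSpace ≤ M.rowSpace := by
  rw [rowSpace_mul, rowSpace_eq_range_vecMulLinear M]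
  exact LinearMap.map_le_range

theorem rowSpace_cons {n : ℕ} (γ : o → F) (Γ : Matrix (Fin n) o F) :
    (of (Fin.cons γ Γ : Fin (n + 1) → o → F)).rowSpace = Γ.rowSpace ⊔ span F {γ} := by
  refine (congrArg (span F) (Fin.range_cons (α := o → F) γ Γ)).trans ?_
  rw [span_insert, sup_comm, rowSpace, row]

variable [Fintype o] {n : ℕ}

theorem rank_cons_mul_eq_min (M : Matrix m o F) (γ : m → F) (Γ : Matrix (Fin n) m F)
    (hΓ : (Γ * M).rank = min n M.rank)
    (hγ : γ ᵥ* M ∈ (Γ * M).rowSpace → (Γ * M).rowSpace = M.rowSpace) :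
    (of (Fin.cons γ Γ) * M).rank = min (n + 1) M.rank := by
  simp only [rank_eq_finrank_rowSpace] at hΓ ⊢
  rw [rowSpace_mul, rowSpace_cons, Submodule.map_sup, map_span, Set.image_singleton,
    ← rowSpace_mul]
  refine finrank_sup_span_singleton_eq_min (rowSpace_mul_le Γ M) ?_ hΓ hγ
  rw [rowSpace_eq_range_vecMulLinear]
  exact LinearMap.mem_range_self _ γ

theorem card_rank_cons_mul_ne_mul_card_le [Fintype F] [DecidableEq m] (M : Matrix m o F)
    (Γ : Matrix (Fin n) m F) (hΓ : (Γ * M).rank = min n M.rank) :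
    #{γ : m → F | (of (Fin.cons γ Γ) * M).rank ≠ min (n + 1) M.rank} *
      Fintype.card F ≤ Fintype.card (m → F) := by
  classical
  by_cases hS : (Γ * M).rowSpace = M.rowSpace
  · have hgood (γ : m → F) := rank_cons_mul_eq_min M γ Γ hΓ fun _ => hS
    rw [filter_false_of_mem fun γ _ => not_not_intro (hgood γ), card_empty, zero_mul]
    exact Nat.zero_le _
  set W := (Γ * M).rowSpace.comap M.vecMulLinear
  have hW : W ≠ ⊤ := fun h => hS <| (rowSpace_mul_le Γ M).antisymm <| by
    rw [rowSpace_eq_range_vecMulLinear, LinearMap.range_le_iff_comap]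
    exact h
  calc _ ≤ Fintype.card W * Fintype.card F := by
        gcongr
        rw [Fintype.card_subtype]
        refine card_le_card (monotone_filter_right _ fun γ _ hγ => ?_)
        by_contra hγW
        exact hγ (rank_cons_mul_eq_min M γ Γ hΓ fun h => absurd h hγW)
    _ ≤ Fintype.card (m → F) := card_mul_card_le_card_of_ne_top hW

theorem card_rank_mul_ne_mul_card_le [Fintype F] [DecidableEq m] (M : Matrix m o F) (n : ℕ) :
    #{Γ : Matrix (Fin n) m F | (Γ * M).rank ≠ min n M.rank} * Fintype.card F ≤
      n * Fintype.card (Matrix (Fin n) m F) := by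
  induction n with
  | zero =>
    have hrank (Γ : Matrix (Fin 0) m F) : (Γ * M).rank = min 0 M.rank := by
      rw [Nat.zero_min]
      exact Nat.le_zero.mp ((Γ * M).rank_le_card_height.trans_eq (Fintype.card_fin 0))
    rw [filter_false_of_mem fun Γ _ => not_not_intro (hrank Γ), card_empty, zero_mul]
    exact Nat.zero_le _
  | succ n ih =>
    set N := Fintype.card (Matrix (Fin n) m F)
    set C := Fintype.card (m → F)
    have hcard : Fintype.card (Matrix (Fin (n + 1)) m F) = C * N := by
      rw [← Fintype.card_prod]
      exact Fintype.card_congr (Fin.consEquiv fun _ => m → F).symm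
    let bad (Γ : Matrix (Fin n) m F) : Prop := (Γ * M).rank ≠ min n M.rank
    have hfibres : #{Γ : Matrix (Fin (n + 1)) m F | (Γ * M).rank ≠ min (n + 1) M.rank} =
        ∑ Γ : Matrix (Fin n) m F,
          #{γ | (of (Fin.cons γ Γ) * M).rank ≠ min (n + 1) M.rank} :=
      Fin.card_filter_cons _
    -- A bad `Γ` may have every extension bad; a good one has at most a `1 / |F|` fraction.
    rw [hfibres, sum_mul, ← sum_filter_add_sum_filter_not univ bad, hcard]
    calc _ ≤ ∑ _Γ ∈ univ.filter bad, C * Fintype.card F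
            + ∑ _Γ ∈ univ.filter (¬bad ·), C := by
          gcongr with Γ _ Γ hΓ
          · exact card_le_univ _
          · exact card_rank_cons_mul_ne_mul_card_le M Γ (not_not.mp (mem_filter.mp hΓ).2)
      _ ≤ n * N * C + N * C := by
          simp only [sum_const, smul_eq_mul]
          have hgood : #{Γ | ¬bad Γ} ≤ N := card_le_univ _
          calc _ = #{Γ | bad Γ} * Fintype.card F * C + #{Γ | ¬bad Γ} * C := by ring
            _ ≤ _ := by gcongr
      _ = (n + 1) * (C * N) := by ring

end Matrix

theorem Finset.one_sub_div_mul_card_le_card_filter {α : Type*} [Fintype α] (P : α → Prop)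
    [DecidablePred P] {c q : ℕ} (hq : 0 < q) (h : #{x | ¬P x} * q ≤ c * Fintype.card α) :
    (1 - (c : ℝ) / q) * Fintype.card α ≤ #{x | P x} := by
  have hsplit : (#{x | P x} + #{x | ¬P x} : ℝ) = Fintype.card α := by
    exact_mod_cast card_filter_add_card_filter_not P
  have hbad : (#{x | ¬P x} : ℝ) ≤ c * Fintype.card α / q := by
    rw [le_div_iff₀ (by exact_mod_cast hq)]
    exact_mod_cast h
  rw [sub_mul, one_mul, div_mul_eq_mul_div]
  linarith

open Classical in
theorem stmt4 {p : ℕ} [Fact p.Prime] {a b k : ℕ}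
    (M : Matrix (Fin a) (Fin b) (ZMod p)) :
    ((1 : ℝ) - (k + 1) / p) * Fintype.card (Matrix (Fin (k + 1)) (Fin a) (ZMod p)) ≤
      Fintype.card {Γ : Matrix (Fin (k + 1)) (Fin a) (ZMod p) //
        (Γ * M).rank = min (k + 1) M.rank} := by
  have hbad := M.card_rank_mul_ne_mul_card_le (k + 1)
  rw [ZMod.card] at hbad
  rw [Fintype.card_subtype]
  exact_mod_cast one_sub_div_mul_card_le_card_filter _ (Fact.out : p.Prime).pos hbad
end

section
/- Let G be a directed graph and let s, t be vertices such that (s,t) is not an edge. If C' is a minimum (s,t)-vertex cut of G (which exists since (s,t) is not an edge), then |C'| equals the maximum number of internally vertex-disjoint paths from s to t, i.e., |C'| = ν(s,t). -/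
/-- `vs` is the list of internal vertices of a directed walk from `s` to `t`
in the digraph with adjacency relation `A`; the internal vertices avoid `s` and `t`. -/
def DWalkInternal {V : Type*} (A : V → V → Prop) (s t : V) (vs : List V) : Prop :=
  List.Chain A s (vs ++ [t]) ∧ ∀ v ∈ vs, v ≠ s ∧ v ≠ t

/-- `nuConn A s t` is the maximum number of pairwise internally vertex-disjoint
directed paths from `s` to `t`. -/
noncomputable def nuConn {V : Type*} (A : V → V → Prop) (s t : V) : ℕ :=
  sSup {n | ∃ f : Fin n → List V, Function.Injective f ∧
    (∀ i, DWalkInternal A s t (f i)) ∧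
    ∀ i j, i ≠ j → ∀ v, v ∈ f i → v ∉ f j}

set_option linter.unusedSectionVars false
set_option maxHeartbeats 1000000

open List

section MengerHelpers

variable {V : Type*}


variable {V : Type*}

theorem chainCons' {R : V → V → Prop} {a b : V} {l : List V} :
    List.Chain R a (b :: l) ↔ R a b ∧ List.Chain R b l :=
  List.isChain_cons_cons

theorem chainSplit' {R : V → V → Prop} {a b : V} {l₁ l₂ : List V} :
    List.Chain R a (l₁ ++ b :: l₂) ↔ List.Chain R a (l₁ ++ [b]) ∧ List.Chain R b l₂ :=
  List.isChain_cons_split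

/-- Chain restricted to a prefix. -/
theorem chainAppendLeft {R : V → V → Prop} {a : V} : ∀ {l₁ l₂ : List V},
    List.Chain R a (l₁ ++ l₂) → List.Chain R a l₁ := by
  intro l₁
  induction l₁ generalizing a with
  | nil => intro _ _; exact List.Chain.nil
  | cons b l ih =>
    intro l₂ h
    rw [List.cons_append, chainCons'] at h
    exact chainCons'.2 ⟨h.1, ih h.2⟩

/-- Monotonicity of chains using membership info. -/
theorem chainMonoMem {R S : V → V → Prop} : ∀ {l : List V} {a : V},
    List.Chain R a l → (∀ x y, x ∈ a :: l → y ∈ l → R x y → S x y) →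
    List.Chain S a l := by
  intro l
  induction l with
  | nil => intro a _ _; exact List.Chain.nil
  | cons b l ih =>
    intro a h hxy
    rw [chainCons'] at h ⊢
    refine ⟨hxy a b (by simp) (by simp) h.1, ih h.2 ?_⟩
    intro x y hx hy hr
    have hx' : x ∈ a :: b :: l := by
      rcases List.mem_cons.1 hx with h | h
      · simp [h]
      · simp [List.mem_cons]; tauto
    exact hxy x y hx' (by simp [hy]) hr

/-- Split a list at the first occurrence. -/
theorem splitFirst {v : V} : ∀ {l : List V}, v ∈ l →
    ∃ l₁ l₂, l = l₁ ++ v :: l₂ ∧ v ∉ l₁ := by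
  intro l
  induction l with
  | nil => simp
  | cons b l ih =>
    intro hv
    by_cases hb : v = b
    · exact ⟨[], l, by simp [hb], by simp⟩
    · rcases ih (by rcases List.mem_cons.1 hv with h | h; exacts [absurd h hb, h]) with
        ⟨l₁, l₂, rfl, hn⟩
      exact ⟨b :: l₁, l₂, by simp, by simp [hn, hb]⟩

/-- Split a list at the last occurrence. -/
theorem splitLast {v : V} {l : List V} (hv : v ∈ l) :
    ∃ l₁ l₂, l = l₁ ++ v :: l₂ ∧ v ∉ l₂ := by
  rcases splitFirst (l := l.reverse) (by simpa using hv) with ⟨l₁, l₂, hl, hn⟩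
  refine ⟨l₂.reverse, l₁.reverse, ?_, by simpa using hn⟩
  have := congrArg List.reverse hl
  simpa using this

theorem chainFlip {R : V → V → Prop} {a b : V} {l : List V} :
    List.Chain R a (l ++ [b]) ↔ List.Chain (fun x y => R y x) b (l.reverse ++ [a]) := by
  constructor
  · intro h
    have := (List.isChain_reverse (l := a :: (l ++ [b])) (R := fun x y => R y x)).2 ?_
    · rw [show (a :: (l ++ [b])).reverse = b :: (l.reverse ++ [a]) by simp] at this
      exact this
    · exact h
  · intro h
    have := (List.isChain_reverse (l := b :: (l.reverse ++ [a])) (R := R)).2 ?_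
    · rw [show (b :: (l.reverse ++ [a])).reverse = a :: (l ++ [b]) by simp] at this
      exact this
    · exact h


theorem chainFlip' {R : V → V → Prop} {a b : V} {l : List V} :
    List.Chain R a (l ++ [b]) → List.Chain (fun x y => R y x) b (l.reverse ++ [a]) :=
  chainFlip.1

/-- The set of vertices on the `s`-side of the cut `X`. -/
def Rside (B : V → V → Prop) (s t : V) (X : Finset V) : Set V :=
  {x | x ∉ X ∧ x ≠ s ∧ x ≠ t ∧ ∃ vs : List V, List.Chain B s (vs ++ [x]) ∧
    ∀ y ∈ vs, y ∉ X ∧ y ≠ s ∧ y ≠ t}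

theorem dwalkMono {A B : V → V → Prop} {s t : V} {vs : List V}
    (hAB : ∀ x y, A x y → B x y) (h : DWalkInternal A s t vs) :
    DWalkInternal B s t vs :=
  ⟨List.Chain.imp (fun _ _ => hAB _ _) h.1, h.2⟩

theorem dwalkFlip {A : V → V → Prop} {s t : V} {vs : List V}
    (h : DWalkInternal A s t vs) :
    DWalkInternal (fun x y => A y x) t s vs.reverse := by
  refine ⟨chainFlip.1 h.1, ?_⟩
  intro x hx
  exact ⟨(h.2 x (by simpa using hx)).2, (h.2 x (by simpa using hx)).1⟩

theorem cutFlip {A : V → V → Prop} {s t : V} {C : Finset V}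
    (h : ¬ ∃ vs : List V, DWalkInternal A s t vs ∧ ∀ v ∈ vs, v ∉ C) :
    ¬ ∃ vs : List V, DWalkInternal (fun x y => A y x) t s vs ∧ ∀ v ∈ vs, v ∉ C := by
  rintro ⟨vs, hw, hC⟩
  refine h ⟨vs.reverse, ?_, fun v hv => hC v (by simpa using hv)⟩
  have := dwalkFlip hw
  simpa using this

theorem normWalk {A : V → V → Prop} {s t : V} (hst : s ≠ t) :
    ∀ (vs : List V) (a : V), a ≠ t → List.Chain A a (vs ++ [t]) →
    (∀ x ∈ vs, x ≠ s ∧ x ≠ t) →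
    ∃ vs' : List V, List.Chain (fun x y => A x y ∧ x ≠ y ∧ y ≠ s ∧ x ≠ t) a (vs' ++ [t]) ∧
      (∀ x ∈ vs', x ∈ vs) := by
  intro vs
  induction vs with
  | nil =>
    intro a hat hch _
    rw [List.nil_append, chainCons'] at hch
    exact ⟨[], by simp [chainCons', hch.1, hat, hst.symm, List.Chain.nil], by simp⟩
  | cons y l ih =>
    intro a hat hch hmem
    rw [List.cons_append, chainCons'] at hch
    have hy := hmem y (by simp)
    by_cases hay : a = y
    · rcases ih a hat (hay ▸ hch.2) (fun x hx => hmem x (by simp [hx])) with ⟨vs', h1, h2⟩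
      exact ⟨vs', h1, fun x hx => by simp [h2 x hx]⟩
    · rcases ih y hy.2 hch.2 (fun x hx => hmem x (by simp [hx])) with ⟨vs', h1, h2⟩
      refine ⟨y :: vs', ?_, ?_⟩
      · rw [List.cons_append, chainCons']
        exact ⟨⟨hch.1, hay, hy.1, hat⟩, h1⟩
      · intro x hx
        rcases List.mem_cons.1 hx with h | h
        · simp [h]
        · simp [h2 x h]

theorem keyNotInR [DecidableEq V] {B : V → V → Prop} {s t u v : V} {S : Finset V}
    (hus : u ≠ s) (hvt : v ≠ t)
    (hne : u ≠ v) (hvS : v ∉ S)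
    (hq : ∃ q : List V, DWalkInternal B s t q ∧ ∀ x ∈ q, x ∉ S)
    (hScut : ¬ ∃ vs : List V, DWalkInternal (fun x y => B x y ∧ ¬(x = u ∧ y = v)) s t vs ∧
      ∀ x ∈ vs, x ∉ S) :
    v ∉ Rside B s t (insert u S) := by
  intro hv
  obtain ⟨hvX, hvs, _, W, hWch, hWm⟩ := hv
  obtain ⟨q, ⟨hqch, hqm⟩, hqS⟩ := hq
  -- v must be in q
  have hvq : v ∈ q := by
    by_contra hvq
    refine hScut ⟨q, ⟨?_, hqm⟩, hqS⟩
    refine chainMonoMem hqch ?_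
    intro x y _ hy hr
    refine ⟨hr, ?_⟩
    rintro ⟨rfl, rfl⟩
    rcases List.mem_append.1 hy with h | h
    · exact hvq h
    · exact hvt (by simpa using h)
  obtain ⟨q₁, q₂, hqeq, hvq₂⟩ := splitLast hvq
  obtain ⟨W', r, hWeq, hvW'⟩ := splitFirst (l := W ++ [v]) (v := v) (by simp)
  have hW'W : ∀ x ∈ W', x ∈ W := by
    intro x hx
    have : x ∈ W ++ [v] := hWeq ▸ List.mem_append_left _ hx
    rcases List.mem_append.1 this with h | h
    · exact h
    · have he : x = v := by simpa using h
      exact absurd (he ▸ hx) hvW'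
  have hc1B : List.Chain B s (W' ++ [v]) := by
    have : List.Chain B s (W' ++ v :: r) := hWeq ▸ hWch
    exact (chainSplit'.1 this).1
  have hc2B : List.Chain B v (q₂ ++ [t]) := by
    have : List.Chain B s (q₁ ++ v :: (q₂ ++ [t])) := by
      have := hqch
      rw [hqeq] at this
      simpa using this
    exact (chainSplit'.1 this).2
  set A' : V → V → Prop := fun x y => B x y ∧ ¬(x = u ∧ y = v) with hA'
  have hc1 : List.Chain A' s (W' ++ [v]) := by
    refine chainMonoMem hc1B ?_
    intro x y hx _ hr
    refine ⟨hr, ?_⟩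
    rintro ⟨rfl, rfl⟩
    rcases List.mem_cons.1 hx with h | h
    · exact hus (by simpa using h.symm ▸ rfl)
    · rcases List.mem_append.1 h with h | h
      · exact (hWm x (hW'W x h)).1 (Finset.mem_insert_self x S)
      · exact hne (by simpa using h)
  have hc2 : List.Chain A' v (q₂ ++ [t]) := by
    refine chainMonoMem hc2B ?_
    intro x y _ hy hr
    refine ⟨hr, ?_⟩
    rintro ⟨rfl, rfl⟩
    rcases List.mem_append.1 hy with h | h
    · exact hvq₂ h
    · exact hvt (by simpa using h)
  have hglue : List.Chain A' s ((W' ++ v :: q₂) ++ [t]) := by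
    have : List.Chain A' s (W' ++ v :: (q₂ ++ [t])) := chainSplit'.2 ⟨hc1, hc2⟩
    simpa using this
  refine hScut ⟨W' ++ v :: q₂, ⟨hglue, ?_⟩, ?_⟩
  · intro x hx
    rcases List.mem_append.1 hx with h | h
    · exact ⟨(hWm x (hW'W x h)).2.1, (hWm x (hW'W x h)).2.2⟩
    · rcases List.mem_cons.1 h with h | h
      · exact h ▸ ⟨hvs, hvt⟩
      · exact hqm x (hqeq ▸ (by simp [h] : x ∈ q₁ ++ v :: q₂))
  · intro x hx
    rcases List.mem_append.1 hx with h | h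
    · exact fun hS => (hWm x (hW'W x h)).1 (Finset.mem_insert_of_mem hS)
    · rcases List.mem_cons.1 h with h | h
      · exact h ▸ hvS
      · exact hqS x (hqeq ▸ (by simp [h] : x ∈ q₁ ++ v :: q₂))


/-- Monotonicity of chains using membership with tails restricted to `a :: l.dropLast`. -/
theorem chainMonoMem' {R S : V → V → Prop} : ∀ {l : List V} {a : V},
    List.Chain R a l → (∀ x y, x ∈ a :: l.dropLast → y ∈ l → R x y → S x y) →
    List.Chain S a l := by
  intro l
  induction l with
  | nil => intro a _ _; exact List.Chain.nil
  | cons b l ih =>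
    intro a h hxy
    rw [chainCons'] at h ⊢
    constructor
    · refine hxy a b ?_ (by simp) h.1
      rcases l with _ | ⟨c, l'⟩ <;> simp
    · refine ih h.2 ?_
      intro x y hx hy hr
      have hl : l ≠ [] := List.ne_nil_of_mem hy
      obtain ⟨c, l', rfl⟩ := List.exists_cons_of_ne_nil hl
      refine hxy x y (List.mem_cons_of_mem _ ?_) (List.mem_cons_of_mem _ hy) hr
      show x ∈ (b :: c :: l').dropLast
      simpa using hx

/-- Split a list at the first element satisfying `P`. -/
theorem splitFirstP {P : V → Prop} : ∀ {l : List V}, (∃ x ∈ l, P x) →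
    ∃ l₁ x l₂, l = l₁ ++ x :: l₂ ∧ P x ∧ ∀ y ∈ l₁, ¬ P y := by
  intro l
  induction l with
  | nil => simp
  | cons b l ih =>
    intro hl
    by_cases hb : P b
    · exact ⟨[], b, l, by simp, hb, by simp⟩
    · have : ∃ x ∈ l, P x := by
        obtain ⟨x, hx, hPx⟩ := hl
        rcases List.mem_cons.1 hx with rfl | hx
        · exact absurd hPx hb
        · exact ⟨x, hx, hPx⟩
      obtain ⟨l₁, x, l₂, rfl, hPx, hn⟩ := ih this
      refine ⟨b :: l₁, x, l₂, by simp, hPx, ?_⟩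
      intro y hy
      rcases List.mem_cons.1 hy with rfl | hy
      · exact hb
      · exact hn y hy

/-- An element of a chain that is not last has a successor. -/
theorem succExists {R : V → V → Prop} {a b x : V} {l : List V}
    (hx : x ∈ l) (h : List.Chain R a (l ++ [b])) : ∃ z, R x z := by
  obtain ⟨l₁, l₂, rfl⟩ := List.append_of_mem hx
  have h' : List.Chain R a (l₁ ++ x :: (l₂ ++ [b])) := by simpa using h
  have := (chainSplit'.1 h').2
  rcases l₂ with _ | ⟨c, l₂⟩
  · exact ⟨b, (chainCons'.1 this).1⟩
  · exact ⟨c, (chainCons'.1 this).1⟩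

/-- Every element of a chain has a predecessor. -/
theorem predExists {R : V → V → Prop} {x : V} : ∀ {l : List V} {a : V},
    x ∈ l → List.Chain R a l → ∃ z, R z x := by
  intro l
  induction l with
  | nil => simp
  | cons b l ih =>
    intro a hx h
    rw [chainCons'] at h
    rcases List.mem_cons.1 hx with rfl | hx
    · exact ⟨a, h.1⟩
    · exact ih hx h.2

end MengerHelpers

section Menger

variable {V : Type*} [Fintype V] [DecidableEq V]

open scoped Classical in
/-- The finite set of edges of a digraph on a fintype. -/
noncomputable def edgeSet (A : V → V → Prop) : Finset (V × V) :=
  Finset.univ.filter (fun p => A p.1 p.2)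

open scoped Classical in
theorem mem_edgeSet {A : V → V → Prop} {p : V × V} : p ∈ edgeSet A ↔ A p.1 p.2 := by
  simp [edgeSet]

theorem edgeSetFlipCard (A : V → V → Prop) :
    (edgeSet (fun x y => A y x)).card = (edgeSet A).card := by
  have himg : edgeSet (fun x y => A y x) = (edgeSet A).image Prod.swap := by
    ext p
    constructor
    · intro hp
      refine Finset.mem_image.2 ⟨p.swap, ?_, by simp⟩
      simp only [mem_edgeSet] at hp ⊢
      simpa using hp
    · intro hp
      obtain ⟨q, hq, rfl⟩ := Finset.mem_image.1 hp
      simp only [mem_edgeSet] at hq ⊢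
      simpa using hq
  rw [himg]
  exact Finset.card_image_of_injective _ Prod.swap_injective

theorem sideLemma (n k : ℕ) (hk : 1 ≤ k)
    (IH : ∀ (A₂ : V → V → Prop) (s₂ t₂ : V), (edgeSet A₂).card ≤ n → s₂ ≠ t₂ → ¬ A₂ s₂ t₂ →
      ∀ k₂ : ℕ, (∀ C : Finset V, s₂ ∉ C → t₂ ∉ C →
        (¬ ∃ vs : List V, DWalkInternal A₂ s₂ t₂ vs ∧ ∀ v ∈ vs, v ∉ C) → k₂ ≤ C.card) →
      ∃ f : Fin k₂ → List V, Function.Injective f ∧ (∀ i, DWalkInternal A₂ s₂ t₂ (f i)) ∧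
        ∀ i j, i ≠ j → ∀ v, v ∈ f i → v ∉ f j)
    (B : V → V → Prop) (s t : V) (hst : s ≠ t) (hBst : ¬ B s t)
    (hE : (edgeSet B).card ≤ n + 1)
    (X : Finset V) (hsX : s ∉ X) (htX : t ∉ X) (hXcard : X.card = k)
    (hXcut : ¬ ∃ vs : List V, DWalkInternal B s t vs ∧ ∀ v ∈ vs, v ∉ X)
    (hmin : ∀ C : Finset V, s ∉ C → t ∉ C →
      (¬ ∃ vs : List V, DWalkInternal B s t vs ∧ ∀ v ∈ vs, v ∉ C) → k ≤ C.card)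
    (v₀ : V) (hv₀X : v₀ ∉ X) (hv₀R : v₀ ∉ Rside B s t X) (hv₀s : v₀ ≠ s)
    (hv₀e : ∃ z, B v₀ z) :
    ∃ g : V → List V, (∀ w ∈ X, List.Chain B s (g w ++ [w]) ∧ ∀ x ∈ g w, x ∈ Rside B s t X) ∧
      (∀ w ∈ X, ∀ w' ∈ X, w ≠ w' → ∀ x ∈ g w, x ∉ g w') := by
  classical
  set R : Set V := Rside B s t X with hRdef
  have htR : t ∉ R := fun h => h.2.2.1 rfl
  have hsR : s ∉ R := fun h => h.2.1 rfl
  have hXR : ∀ x ∈ X, x ∉ R := fun x hx h => h.1 hx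
  set As : V → V → Prop := fun x y =>
    (B x y ∧ (x = s ∨ x ∈ R) ∧ (y ∈ R ∨ y ∈ X)) ∨ (x ∈ X ∧ y = t) with hAsdef
  have hAsB : ∀ x y, As x y → y ≠ t → B x y ∧ (x = s ∨ x ∈ R) ∧ (y ∈ R ∨ y ∈ X) := by
    rintro x y (h | h) hyt
    · exact h
    · exact absurd h.2 hyt
  have hAsst : ¬ As s t := by
    rintro (h | h)
    · rcases h.2.2 with h' | h'
      · exact htR h'
      · exact htX h'
    · exact hsX h.1
  -- Every (s,t)-cut of As has at least k vertices
  have hAsmin : ∀ T : Finset V, s ∉ T → t ∉ T →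
      (¬ ∃ vs : List V, DWalkInternal As s t vs ∧ ∀ v ∈ vs, v ∉ T) → k ≤ T.card := by
    intro T hsT htT hTcut
    refine hmin T hsT htT ?_
    rintro ⟨vs, ⟨hch, hm⟩, hT⟩
    have hhit : ∃ x ∈ vs, x ∈ X := by
      by_contra h
      push_neg at h
      exact hXcut ⟨vs, ⟨hch, hm⟩, h⟩
    obtain ⟨vs₁, w, vs₂, rfl, hwX, hvs₁⟩ := splitFirstP hhit
    have hch1 : List.Chain B s (vs₁ ++ [w]) := by
      have h' : List.Chain B s (vs₁ ++ w :: (vs₂ ++ [t])) := by simpa using hch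
      exact (chainSplit'.1 h').1
    have hvs₁R : ∀ x ∈ vs₁, x ∈ R := by
      intro x hx
      obtain ⟨l₁, l₂, rfl⟩ := List.append_of_mem hx
      refine ⟨hvs₁ x (by simp), (hm x (by simp)).1, (hm x (by simp)).2, l₁, ?_, ?_⟩
      · have h' : List.Chain B s (l₁ ++ x :: (l₂ ++ [w])) := by simpa using hch1
        exact (chainSplit'.1 h').1
      · intro y hy
        exact ⟨hvs₁ y (by simp [hy]), (hm y (by simp [hy])).1, (hm y (by simp [hy])).2⟩
    have hchAs : List.Chain As s ((vs₁ ++ [w]) ++ [t]) := by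
      have h1 : List.Chain As s (vs₁ ++ [w]) := by
        refine chainMonoMem' hch1 ?_
        intro x y hx hy hxy
        left
        refine ⟨hxy, ?_, ?_⟩
        · rcases List.mem_cons.1 hx with h' | h'
          · exact Or.inl h'
          · exact Or.inr (hvs₁R x (by simpa using h'))
        · rcases List.mem_append.1 hy with h' | h'
          · exact Or.inl (hvs₁R y h')
          · have : y = w := by simpa using h'
            exact Or.inr (this ▸ hwX)
      have h2 : List.Chain As w [t] := chainCons'.2 ⟨Or.inr ⟨hwX, rfl⟩, List.Chain.nil⟩
      have := chainSplit'.2 ⟨h1, h2⟩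
      simpa using this
    refine hTcut ⟨vs₁ ++ [w], ⟨hchAs, ?_⟩, ?_⟩
    · intro x hx
      rcases List.mem_append.1 hx with h' | h'
      · exact hm x (by simp [h'])
      · have : x = w := by simpa using h'
        subst this
        exact hm x (by simp)
    · intro x hx
      rcases List.mem_append.1 hx with h' | h'
      · exact hT x (by simp [h'])
      · have : x = w := by simpa using h'
        subst this
        exact hT x (by simp)
  -- every vertex of X has an out-edge
  have hout : ∀ x ∈ X, ∃ z, B x z := by
    intro x hx
    have hnc : ¬ k ≤ (X.erase x).card := by
      rw [Finset.card_erase_of_mem hx, hXcard]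
      omega
    have hwalk : ∃ vs : List V, DWalkInternal B s t vs ∧ ∀ v ∈ vs, v ∉ X.erase x := by
      by_contra h
      exact hnc (hmin _ (fun h' => hsX (Finset.mem_of_mem_erase h'))
        (fun h' => htX (Finset.mem_of_mem_erase h')) h)
    obtain ⟨vs, ⟨hch, hm⟩, he⟩ := hwalk
    have hhit : ∃ y ∈ vs, y ∈ X := by
      by_contra h
      push_neg at h
      exact hXcut ⟨vs, ⟨hch, hm⟩, h⟩
    obtain ⟨y, hy, hyX⟩ := hhit
    have hyx : y = x := by
      by_contra h
      exact he y hy (Finset.mem_erase.2 ⟨h, hyX⟩)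
    subst hyx
    exact succExists hy hch
  -- edge counting
  have hEAs : (edgeSet As).card ≤ n := by
    set F : Finset (V × V) := (edgeSet B).filter (fun p => p.1 ≠ v₀ ∧ p.1 ∉ X) with hF
    set D : Finset (V × V) := (edgeSet B).filter (fun p => p.1 = v₀ ∨ p.1 ∈ X) with hD
    have hsub : edgeSet As ⊆ F ∪ X.image (fun x => (x, t)) := by
      intro p hp
      rw [mem_edgeSet] at hp
      rcases hp with h | h
      · refine Finset.mem_union_left _ (Finset.mem_filter.2 ⟨mem_edgeSet.2 h.1, ?_, ?_⟩)
        · rcases h.2.1 with h' | h'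
          · exact h' ▸ (Ne.symm hv₀s)
          · exact fun e => hv₀R (e ▸ h')
        · rcases h.2.1 with h' | h'
          · exact h' ▸ hsX
          · exact fun hX => hXR _ hX h'
      · refine Finset.mem_union_right _ (Finset.mem_image.2 ⟨p.1, h.1, ?_⟩)
        exact Prod.ext rfl h.2.symm
    have hz : ∀ x, ∃ z, x ∈ X → B x z := by
      intro x
      by_cases hx : x ∈ X
      · obtain ⟨z, hz⟩ := hout x hx
        exact ⟨z, fun _ => hz⟩
      · exact ⟨v₀, fun h => absurd h hx⟩
    choose zf hzf using hz
    obtain ⟨z₀, hz₀⟩ := hv₀e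
    set I : Finset (V × V) := insert (v₀, z₀) (X.image fun x => (x, zf x)) with hI
    have hIsub : I ⊆ D := by
      intro p hp
      rcases Finset.mem_insert.1 hp with rfl | hp
      · exact Finset.mem_filter.2 ⟨mem_edgeSet.2 hz₀, Or.inl rfl⟩
      · obtain ⟨x, hx, rfl⟩ := Finset.mem_image.1 hp
        exact Finset.mem_filter.2 ⟨mem_edgeSet.2 (hzf x hx), Or.inr hx⟩
    have hIcard : I.card = k + 1 := by
      rw [hI, Finset.card_insert_of_notMem, Finset.card_image_of_injOn, hXcard]
      · intro a _ b _ hab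
        exact congrArg Prod.fst hab
      · intro h
        obtain ⟨x, hx, he⟩ := Finset.mem_image.1 h
        have hxv : x = v₀ := congrArg Prod.fst he
        exact hv₀X (hxv ▸ hx)
    have hFD : Disjoint F D := by
      rw [Finset.disjoint_left]
      intro p hpF hpD
      have h1 := (Finset.mem_filter.1 hpF).2
      have h2 := (Finset.mem_filter.1 hpD).2
      tauto
    have hFDcard : F.card + D.card ≤ (edgeSet B).card := by
      rw [← Finset.card_union_of_disjoint hFD]
      exact Finset.card_le_card (Finset.union_subset (Finset.filter_subset _ _)
        (Finset.filter_subset _ _))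
    have hDk : k + 1 ≤ D.card := hIcard ▸ Finset.card_le_card hIsub
    have himg : (X.image (fun x => (x, t))).card ≤ k := hXcard ▸ Finset.card_image_le
    have h1 : (edgeSet As).card ≤ F.card + k :=
      le_trans (Finset.card_le_card hsub) (le_trans (Finset.card_union_le _ _)
        (by omega))
    omega
  -- apply the induction hypothesis to As
  obtain ⟨f, hfinj, hfw, hfd⟩ := IH As s t hEAs hst hAsst k hAsmin
  -- structure of the As-paths
  have hstruct : ∀ i : Fin k, ∃ g w, f i = g ++ [w] ∧ w ∈ X ∧ ∀ x ∈ g, x ∈ R := by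
    intro i
    obtain ⟨hch, hm⟩ := hfw i
    rcases List.eq_nil_or_concat' (f i) with h | ⟨g, w, h⟩
    · rw [h] at hch
      simp only [List.nil_append, chainCons'] at hch
      exact absurd hch.1 hAsst
    · rw [h] at hch hm
      have hch' : List.Chain As s (g ++ w :: [t]) := by simpa using hch
      have hwt : As w t := (chainCons'.1 (chainSplit'.1 hch').2).1
      have hwX : w ∈ X := by
        rcases hwt with h' | h'
        · rcases h'.2.2 with h'' | h''
          · exact absurd h'' htR
          · exact absurd h'' htX
        · exact h'.1
      have hginR : ∀ (l : List V) (a : V), List.Chain As a ((l ++ [w]) ++ [t]) →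
          (∀ x ∈ l, x ≠ t) → ∀ x ∈ l, x ∈ R := by
        intro l
        induction l with
        | nil => intro a _ _ x hx; simp at hx
        | cons y l' ih =>
          intro a hcha hmt x hx
          have hch2 : List.Chain As a (y :: ((l' ++ [w]) ++ [t])) := by simpa using hcha
          rw [chainCons'] at hch2
          have hyR : y ∈ R := by
            have hyt : y ≠ t := hmt y (by simp)
            rcases hAsB _ _ hch2.1 hyt with ⟨_, _, hy2⟩
            rcases hy2 with h' | h'
            · exact h'
            · exfalso
              obtain ⟨c, rest, hcr⟩ : ∃ c rest, (l' ++ [w]) ++ [t] = c :: rest := by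
                rcases l' with _ | ⟨d, l''⟩
                · exact ⟨w, [t], by simp⟩
                · exact ⟨d, (l'' ++ [w]) ++ [t], by simp⟩
              have hyc : As y c := by
                have h3 := hch2.2
                rw [hcr, chainCons'] at h3
                exact h3.1
              have hct : c ≠ t := by
                rcases l' with _ | ⟨d, l''⟩
                · have : c = w := by
                    have := congrArg (fun l => l.head?) hcr
                    simp at this
                    exact this.symm
                  exact this ▸ (fun e => htX (e ▸ hwX))
                · have : c = d := by
                    have := congrArg (fun l => l.head?) hcr
                    simp at this
                    exact this.symm
                  exact this ▸ hmt d (by simp)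
              rcases hyc with h'' | h''
              · rcases h''.2.1 with h3 | h3
                · exact hsX (h3 ▸ h')
                · exact hXR y h' h3
              · exact hct h''.2
          rcases List.mem_cons.1 hx with rfl | hx'
          · exact hyR
          · exact ih y hch2.2 (fun z hz => hmt z (by simp [hz])) x hx'
      refine ⟨g, w, h, hwX, ?_⟩
      exact hginR g s (by simpa using hch') (fun x hx => (hm x (by simp [hx])).2)
  choose gf wf hfeq hwfX hgfR using hstruct
  have hwfmem : ∀ i, wf i ∈ f i := by
    intro i
    rw [hfeq i]
    simp
  have hwinj : Function.Injective wf := by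
    intro i j hij
    by_contra hne
    exact hfd i j hne (wf i) (hwfmem i) (hij ▸ hwfmem j)
  have hsurj : ∀ w ∈ X, ∃ i, wf i = w := by
    intro w hw
    let φ : Fin k → {x // x ∈ X} := fun i => ⟨wf i, hwfX i⟩
    have hφinj : Function.Injective φ := fun i j h => hwinj (congrArg Subtype.val h)
    have hφbij : Function.Bijective φ :=
      (Fintype.bijective_iff_injective_and_card φ).2
        ⟨hφinj, by simp [Fintype.card_coe, hXcard]⟩
    obtain ⟨i, hi⟩ := hφbij.2 ⟨w, hw⟩
    exact ⟨i, congrArg Subtype.val hi⟩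
  -- define the fan
  refine ⟨fun w => if h : ∃ i, wf i = w then gf h.choose else [], ?_, ?_⟩
  · intro w hw
    obtain ⟨i, hi⟩ := hsurj w hw
    have hex : ∃ i, wf i = w := ⟨i, hi⟩
    simp only [dif_pos hex]
    set i₀ := hex.choose with hi₀
    have hw₀ : wf i₀ = w := hex.choose_spec
    constructor
    · -- chain B s (gf i₀ ++ [w])
      have hch := (hfw i₀).1
      have hm := (hfw i₀).2
      rw [hfeq i₀, hw₀] at hch hm
      have hchpre : List.Chain As s (gf i₀ ++ [w]) := chainAppendLeft (l₂ := [t]) hch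
      refine chainMonoMem hchpre ?_
      intro x y _ hy hxy
      have hyt : y ≠ t := by
        rcases List.mem_append.1 hy with h' | h'
        · exact (hm y (by simp [h'])).2
        · have : y = w := by simpa using h'
          exact this ▸ fun e => htX (e ▸ hw)
      exact (hAsB _ _ hxy hyt).1
    · exact fun x hx => hgfR i₀ x hx
  · intro w hw w' hw' hne x hx
    obtain ⟨i, hi⟩ := hsurj w hw
    obtain ⟨j, hj⟩ := hsurj w' hw'
    have hex : ∃ i, wf i = w := ⟨i, hi⟩
    have hex' : ∃ i, wf i = w' := ⟨j, hj⟩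
    simp only [dif_pos hex] at hx
    simp only [dif_pos hex']
    have hij : hex.choose ≠ hex'.choose := by
      intro h
      exact hne (hex.choose_spec ▸ h ▸ hex'.choose_spec)
    intro hx'
    have h1 : x ∈ f hex.choose := by
      rw [hfeq]
      exact List.mem_append_left _ hx
    have h2 : x ∈ f hex'.choose := by
      rw [hfeq]
      exact List.mem_append_left _ hx'
    exact hfd _ _ hij x h1 h2

theorem mengerCore : ∀ (n : ℕ) (A : V → V → Prop) (s t : V), (edgeSet A).card ≤ n →
    s ≠ t → ¬ A s t →
    ∀ k : ℕ, (∀ C : Finset V, s ∉ C → t ∉ C →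
      (¬ ∃ vs : List V, DWalkInternal A s t vs ∧ ∀ v ∈ vs, v ∉ C) → k ≤ C.card) →
    ∃ f : Fin k → List V, Function.Injective f ∧ (∀ i, DWalkInternal A s t (f i)) ∧
      ∀ i j, i ≠ j → ∀ v, v ∈ f i → v ∉ f j := by
  intro n
  induction n using Nat.strong_induction_on with
  | _ n IH =>
  intro A s t hE hst hAst k hmin
  classical
  rcases Nat.eq_zero_or_pos k with rfl | hk
  · exact ⟨fun i => i.elim0, fun i => i.elim0, fun i => i.elim0, fun i => i.elim0⟩
  -- normalize the graph
  set B : V → V → Prop := fun x y => A x y ∧ x ≠ y ∧ y ≠ s ∧ x ≠ t with hBdef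
  have hBA : ∀ x y, B x y → A x y := fun x y h => h.1
  have hBst : ¬ B s t := fun h => hAst h.1
  have hEB : (edgeSet B).card ≤ n :=
    le_trans (Finset.card_le_card (fun p hp => mem_edgeSet.2 (mem_edgeSet.1 hp).1)) hE
  have hwalkAB : ∀ C : Finset V,
      (¬ ∃ vs : List V, DWalkInternal B s t vs ∧ ∀ v ∈ vs, v ∉ C) →
      (¬ ∃ vs : List V, DWalkInternal A s t vs ∧ ∀ v ∈ vs, v ∉ C) := by
    rintro C hB ⟨vs, ⟨hch, hm⟩, hC⟩
    obtain ⟨vs', hch', hsub⟩ := normWalk hst vs s hst hch hm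
    exact hB ⟨vs', ⟨hch', fun x hx => hm x (hsub x hx)⟩, fun x hx => hC x (hsub x hx)⟩
  have hminB : ∀ C : Finset V, s ∉ C → t ∉ C →
      (¬ ∃ vs : List V, DWalkInternal B s t vs ∧ ∀ v ∈ vs, v ∉ C) → k ≤ C.card :=
    fun C h1 h2 h3 => hmin C h1 h2 (hwalkAB C h3)
  -- it suffices to find the family for B
  suffices hsuf : ∃ f : Fin k → List V, Function.Injective f ∧
      (∀ i, DWalkInternal B s t (f i)) ∧ ∀ i j, i ≠ j → ∀ v, v ∈ f i → v ∉ f j by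
    obtain ⟨f, h1, h2, h3⟩ := hsuf
    exact ⟨f, h1, fun i => dwalkMono hBA (h2 i), h3⟩
  by_cases hcase : ∃ u v, B u v ∧ u ≠ s ∧ v ≠ t
  case neg =>
    -- all edges leave s or enter t
    push_neg at hcase
    set M : Finset V := Finset.univ.filter (fun x => x ≠ s ∧ x ≠ t ∧ B s x ∧ B x t)
      with hMdef
    have hMmem : ∀ x, x ∈ M ↔ x ≠ s ∧ x ≠ t ∧ B s x ∧ B x t := by
      intro x
      simp [hMdef]
    have hMcut : ¬ ∃ vs : List V, DWalkInternal B s t vs ∧ ∀ v ∈ vs, v ∉ M := by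
      rintro ⟨vs, ⟨hch, hm⟩, hM⟩
      rcases vs with _ | ⟨x, _ | ⟨y, l⟩⟩
      · rw [List.nil_append, chainCons'] at hch
        exact hBst hch.1
      · rw [List.cons_append, List.nil_append, chainCons', chainCons'] at hch
        exact hM x (by simp) ((hMmem x).2 ⟨(hm x (by simp)).1, (hm x (by simp)).2,
          hch.1, hch.2.1⟩)
      · rw [List.cons_append, chainCons'] at hch
        have hxy : B x y := by
          rw [List.cons_append, chainCons'] at hch
          exact hch.2.1
        exact (hm y (by simp)).2 (hcase x y hxy (hm x (by simp)).1)
    have hkM : k ≤ M.card := hminB M (fun h => ((hMmem s).1 h).1 rfl)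
      (fun h => ((hMmem t).1 h).2.1 rfl) hMcut
    obtain ⟨N, hNM, hNcard⟩ := Finset.exists_subset_card_eq hkM
    set e := N.equivFinOfCardEq hNcard with hedef
    refine ⟨fun i => [(e.symm i : V)], ?_, ?_, ?_⟩
    · intro i j hij
      have : (e.symm i : V) = (e.symm j : V) := by
        simpa using hij
      have h2 : e.symm i = e.symm j := Subtype.ext this
      simpa using congrArg e h2
    · intro i
      have hmem := (hMmem _).1 (hNM (e.symm i).2)
      constructor
      · simp only [List.cons_append, List.nil_append]
        exact chainCons'.2 ⟨hmem.2.2.1, chainCons'.2 ⟨hmem.2.2.2, List.Chain.nil⟩⟩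
      · intro v hv
        have : v = (e.symm i : V) := by simpa using hv
        subst this
        exact ⟨hmem.1, hmem.2.1⟩
    · intro i j hij v hv hv'
      have h1 : v = (e.symm i : V) := by simpa using hv
      have h2 : v = (e.symm j : V) := by simpa using hv'
      have : e.symm i = e.symm j := Subtype.ext (h1 ▸ h2)
      exact hij (by simpa using congrArg e this)
  case pos =>
  obtain ⟨u, v, huv, hus, hvt⟩ := hcase
  have huv' : u ≠ v := huv.2.1
  have hvs : v ≠ s := huv.2.2.1
  have hut : u ≠ t := huv.2.2.2
  set A' : V → V → Prop := fun x y => B x y ∧ ¬(x = u ∧ y = v) with hA'def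
  have hn1 : 1 ≤ n := by
    have : (u, v) ∈ edgeSet B := mem_edgeSet.2 huv
    have := Finset.card_pos.2 ⟨_, this⟩
    omega
  have hE' : (edgeSet A').card ≤ n - 1 := by
    have hsub : edgeSet A' ⊆ (edgeSet B).erase (u, v) := by
      intro p hp
      rw [mem_edgeSet] at hp
      refine Finset.mem_erase.2 ⟨?_, mem_edgeSet.2 hp.1⟩
      intro he
      exact hp.2 ⟨congrArg Prod.fst he, congrArg Prod.snd he⟩
    calc (edgeSet A').card ≤ ((edgeSet B).erase (u, v)).card := Finset.card_le_card hsub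
      _ = (edgeSet B).card - 1 := Finset.card_erase_of_mem (mem_edgeSet.2 huv)
      _ ≤ n - 1 := by omega
  have hnlt : n - 1 < n := by omega
  by_cases hA'min : ∀ C : Finset V, s ∉ C → t ∉ C →
      (¬ ∃ vs : List V, DWalkInternal A' s t vs ∧ ∀ v ∈ vs, v ∉ C) → k ≤ C.card
  case pos =>
    obtain ⟨f, h1, h2, h3⟩ := IH (n - 1) hnlt A' s t hE' hst
      (fun h => hBst h.1) k hA'min
    exact ⟨f, h1, fun i => dwalkMono (fun x y h => h.1) (h2 i), h3⟩
  case neg =>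
  push_neg at hA'min
  obtain ⟨S, hsS, htS, hScut0, hSk⟩ := hA'min
  have hScut : ¬ ∃ vs : List V, DWalkInternal A' s t vs ∧ ∀ x ∈ vs, x ∉ S := by
    rintro ⟨vs, hw, hav⟩
    obtain ⟨x, hx, hxS⟩ := hScut0 vs hw
    exact hav x hx hxS
  clear hScut0
  set X : Finset V := insert u S with hXdef
  set Y : Finset V := insert v S with hYdef
  have hsX : s ∉ X := by
    simp only [hXdef, Finset.mem_insert]
    push_neg
    exact ⟨Ne.symm hus, hsS⟩
  have htX : t ∉ X := by
    simp only [hXdef, Finset.mem_insert]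
    push_neg
    exact ⟨Ne.symm hut, htS⟩
  have hsY : s ∉ Y := by
    simp only [hYdef, Finset.mem_insert]
    push_neg
    exact ⟨Ne.symm hvs, hsS⟩
  have htY : t ∉ Y := by
    simp only [hYdef, Finset.mem_insert]
    push_neg
    exact ⟨Ne.symm hvt, htS⟩
  -- X is a cut of B
  have hXcut : ¬ ∃ vs : List V, DWalkInternal B s t vs ∧ ∀ x ∈ vs, x ∉ X := by
    rintro ⟨vs, ⟨hch, hm⟩, hav⟩
    refine hScut ⟨vs, ⟨?_, hm⟩, fun x hx => fun hxS => hav x hx (Finset.mem_insert_of_mem hxS)⟩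
    refine chainMonoMem' hch ?_
    intro x y hx _ hxy
    refine ⟨hxy, ?_⟩
    rintro ⟨rfl, rfl⟩
    rcases List.mem_cons.1 hx with h' | h'
    · exact hus h'
    · have : x ∈ vs := by
        have hdl : (vs ++ [t]).dropLast = vs := by simp
        rw [hdl] at h'
        exact h'
      exact hav x this (Finset.mem_insert_self x S)
  -- Y is a cut of B
  have hYcut : ¬ ∃ vs : List V, DWalkInternal B s t vs ∧ ∀ x ∈ vs, x ∉ Y := by
    rintro ⟨vs, ⟨hch, hm⟩, hav⟩
    refine hScut ⟨vs, ⟨?_, hm⟩, fun x hx => fun hxS => hav x hx (Finset.mem_insert_of_mem hxS)⟩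
    refine chainMonoMem hch ?_
    intro x y _ hy hxy
    refine ⟨hxy, ?_⟩
    rintro ⟨rfl, rfl⟩
    rcases List.mem_append.1 hy with h' | h'
    · exact hav y h' (Finset.mem_insert_self y S)
    · exact hvt (by simpa using h')
  have hXk : k ≤ X.card := hminB X hsX htX hXcut
  have hYk : k ≤ Y.card := hminB Y hsY htY hYcut
  have huS : u ∉ S := by
    intro h
    rw [hXdef] at hXk
    rw [Finset.insert_eq_self.2 h] at hXk
    omega
  have hvS : v ∉ S := by
    intro h
    rw [hYdef] at hYk
    rw [Finset.insert_eq_self.2 h] at hYk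
    omega
  have hXcard : X.card = k := by
    rw [hXdef, Finset.card_insert_of_notMem huS]
    rw [hXdef, Finset.card_insert_of_notMem huS] at hXk
    omega
  have hYcard : Y.card = k := by
    rw [hYdef, Finset.card_insert_of_notMem hvS]
    rw [hYdef, Finset.card_insert_of_notMem hvS] at hYk
    omega
  -- there is a walk avoiding S
  have hq : ∃ q : List V, DWalkInternal B s t q ∧ ∀ x ∈ q, x ∉ S := by
    by_contra h
    have := hminB S hsS htS h
    omega
  have hvX : v ∉ X := by
    simp only [hXdef, Finset.mem_insert]
    push_neg
    exact ⟨Ne.symm huv', hvS⟩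
  have huY : u ∉ Y := by
    simp only [hYdef, Finset.mem_insert]
    push_neg
    exact ⟨huv', huS⟩
  -- key non-membership facts
  have hvR : v ∉ Rside B s t X := keyNotInR hus hvt huv' hvS hq hScut
  have hqflip : ∃ q : List V, DWalkInternal (fun x y => B y x) t s q ∧ ∀ x ∈ q, x ∉ S := by
    obtain ⟨q, hqw, hqS⟩ := hq
    exact ⟨q.reverse, dwalkFlip hqw, fun x hx => hqS x (by simpa using hx)⟩
  have hScutflip : ¬ ∃ vs : List V,
      DWalkInternal (fun x y => (fun x y => B y x) x y ∧ ¬(x = v ∧ y = u)) t s vs ∧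
      ∀ x ∈ vs, x ∉ S := by
    rintro ⟨vs, hw, hav⟩
    have hw' := dwalkFlip hw
    refine hScut ⟨vs.reverse, dwalkMono ?_ hw', fun x hx => hav x (by simpa using hx)⟩
    intro x y h
    exact ⟨h.1, fun he => h.2 ⟨he.2, he.1⟩⟩
  have huR : u ∉ Rside (fun x y => B y x) t s Y :=
    keyNotInR hvt hus huv'.symm huS hqflip hScutflip
  -- out-edge of v, in-edge of u
  have hout_v : ∃ z, B v z := by
    obtain ⟨q, ⟨hch, hm⟩, hqS⟩ := hq
    have hhit : ∃ y ∈ q, y ∈ Y := by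
      by_contra hcon
      push_neg at hcon
      exact hYcut ⟨q, ⟨hch, hm⟩, hcon⟩
    obtain ⟨y, hy, hyY⟩ := hhit
    have hyv : y = v := by
      rcases Finset.mem_insert.1 hyY with h' | h'
      · exact h'
      · exact absurd h' (hqS y hy)
    exact hyv ▸ succExists hy hch
  have hin_u : ∃ z, B z u := by
    obtain ⟨q, ⟨hch, hm⟩, hqS⟩ := hq
    have hhit : ∃ y ∈ q, y ∈ X := by
      by_contra hcon
      push_neg at hcon
      exact hXcut ⟨q, ⟨hch, hm⟩, hcon⟩
    obtain ⟨y, hy, hyX⟩ := hhit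
    have hyu : y = u := by
      rcases Finset.mem_insert.1 hyX with h' | h'
      · exact h'
      · exact absurd h' (hqS y hy)
    exact hyu ▸ predExists (List.mem_append_left _ hy) hch
  -- apply the side lemma on both sides
  have IH' := IH (n - 1) hnlt
  have hEB' : (edgeSet B).card ≤ (n - 1) + 1 := by omega
  obtain ⟨g, hg1, hg2⟩ := sideLemma (n - 1) k hk IH' B s t hst hBst hEB' X hsX htX
    hXcard hXcut hminB v hvX hvR hvs hout_v
  have hBstflip : ¬ (fun x y => B y x) t s := hBst
  have hEBflip : (edgeSet (fun x y => B y x)).card ≤ (n - 1) + 1 := by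
    rw [edgeSetFlipCard]
    omega
  have hYcutflip := cutFlip hYcut
  have hminflip : ∀ C : Finset V, t ∉ C → s ∉ C →
      (¬ ∃ vs : List V, DWalkInternal (fun x y => B y x) t s vs ∧ ∀ x ∈ vs, x ∉ C) →
      k ≤ C.card := by
    intro C h1 h2 h3
    refine hminB C h2 h1 ?_
    exact cutFlip (A := fun x y => B y x) (s := t) (t := s) h3
  obtain ⟨h, hh1, hh2⟩ := sideLemma (n - 1) k hk IH' (fun x y => B y x) t s hst.symm
    hBstflip hEBflip Y htY hsY hYcard hYcutflip hminflip u huY huR hut hin_u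
  -- disjointness of the two sides
  have hRsRt : ∀ x, x ∈ Rside B s t X → x ∈ Rside (fun x y => B y x) t s Y → False := by
    rintro x ⟨hxX, hxs, hxt, W, hWch, hWm⟩ ⟨hxY, _, _, W₂, hW₂ch, hW₂m⟩
    have hc2B : List.Chain B x (W₂.reverse ++ [t]) := chainFlip.1 hW₂ch
    have hc1 : List.Chain A' s (W ++ [x]) := by
      refine chainMonoMem' hWch ?_
      intro a b ha _ hab
      refine ⟨hab, ?_⟩
      rintro ⟨rfl, rfl⟩
      rcases List.mem_cons.1 ha with h' | h'
      · exact hus h'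
      · have haW : a ∈ W := by simpa using h'
        exact (hWm a haW).1 (Finset.mem_insert_self a S)
    have hc2 : List.Chain A' x (W₂.reverse ++ [t]) := by
      refine chainMonoMem hc2B ?_
      intro a b _ hb hab
      refine ⟨hab, ?_⟩
      rintro ⟨rfl, rfl⟩
      rcases List.mem_append.1 hb with h' | h'
      · exact (hW₂m b (by simpa using h')).1 (Finset.mem_insert_self b S)
      · exact hvt (by simpa using h')
    have hglue : List.Chain A' s ((W ++ x :: W₂.reverse) ++ [t]) := by
      have := chainSplit'.2 ⟨hc1, hc2⟩
      simpa using this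
    refine hScut ⟨W ++ x :: W₂.reverse, ⟨hglue, ?_⟩, ?_⟩
    · intro a ha
      rcases List.mem_append.1 ha with h' | h'
      · exact ⟨(hWm a h').2.1, (hWm a h').2.2⟩
      · rcases List.mem_cons.1 h' with rfl | h''
        · exact ⟨hxs, hxt⟩
        · have haW : a ∈ W₂ := by simpa using h''
          exact ⟨(hW₂m a haW).2.2, (hW₂m a haW).2.1⟩
    · intro a ha
      rcases List.mem_append.1 ha with h' | h'
      · exact fun hS => (hWm a h').1 (Finset.mem_insert_of_mem hS)
      · rcases List.mem_cons.1 h' with rfl | h''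
        · exact fun hS => hxX (Finset.mem_insert_of_mem hS)
        · have haW : a ∈ W₂ := by simpa using h''
          exact fun hS => (hW₂m a haW).1 (Finset.mem_insert_of_mem hS)
  have hRsY : ∀ x, x ∈ Rside B s t X → x ∉ Y := by
    intro x hx hxY
    rcases Finset.mem_insert.1 hxY with rfl | h'
    · exact hvR hx
    · exact hx.1 (Finset.mem_insert_of_mem h')
  have hRtX : ∀ x, x ∈ Rside (fun x y => B y x) t s Y → x ∉ X := by
    intro x hx hxX
    rcases Finset.mem_insert.1 hxX with rfl | h'
    · exact huR hx
    · exact hx.1 (Finset.mem_insert_of_mem h')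
  -- glue the two sides
  set tgt : V → V := fun w => if w = u then v else w with htgtdef
  set mid : V → List V := fun w => if w = u then [u, v] else [w] with hmiddef
  set path : V → List V := fun w => g w ++ mid w ++ (h (tgt w)).reverse with hpathdef
  have htgtY : ∀ w ∈ X, tgt w ∈ Y := by
    intro w hw
    by_cases hwu : w = u
    · simp only [htgtdef, if_pos hwu]
      exact Finset.mem_insert_self v S
    · simp only [htgtdef, if_neg hwu]
      rcases Finset.mem_insert.1 hw with h' | h'
      · exact absurd h' hwu
      · exact Finset.mem_insert_of_mem h'
  have htgtinj : ∀ w ∈ X, ∀ w' ∈ X, w ≠ w' → tgt w ≠ tgt w' := by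
    intro w hw w' hw' hne he
    by_cases h1 : w = u <;> by_cases h2 : w' = u
    · exact hne (h1.trans h2.symm)
    · rw [htgtdef] at he
      simp only [if_pos h1, if_neg h2] at he
      exact hvX (he ▸ hw')
    · rw [htgtdef] at he
      simp only [if_neg h1, if_pos h2] at he
      exact hvX (he ▸ hw)
    · rw [htgtdef] at he
      simp only [if_neg h1, if_neg h2] at he
      exact hne he
  have hmemmid : ∀ w x, x ∈ mid w → (w = u ∧ (x = u ∨ x = v)) ∨ (w ≠ u ∧ x = w) := by
    intro w x hx
    by_cases hwu : w = u
    · refine Or.inl ⟨hwu, ?_⟩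
      rw [hmiddef] at hx
      simp only [if_pos hwu] at hx
      simpa using hx
    · refine Or.inr ⟨hwu, ?_⟩
      rw [hmiddef] at hx
      simp only [if_neg hwu] at hx
      simpa using hx
  have hmidXY : ∀ w ∈ X, ∀ x ∈ mid w, x ∈ X ∨ x ∈ Y := by
    intro w hw x hx
    rcases hmemmid w x hx with ⟨hwu, h3 | h3⟩ | ⟨hwu, h3⟩
    · exact Or.inl (by rw [h3]; exact Finset.mem_insert_self u S)
    · exact Or.inr (by rw [h3]; exact Finset.mem_insert_self v S)
    · exact Or.inl (by rw [h3]; exact hw)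
  have hmidne : ∀ w ∈ X, ∀ x ∈ mid w, x ≠ s ∧ x ≠ t := by
    intro w hw x hx
    rcases hmidXY w hw x hx with h' | h'
    · exact ⟨fun e => hsX (e ▸ h'), fun e => htX (e ▸ h')⟩
    · exact ⟨fun e => hsY (e ▸ h'), fun e => htY (e ▸ h')⟩
  have hmiddisj : ∀ w ∈ X, ∀ w' ∈ X, w ≠ w' → ∀ x ∈ mid w, x ∉ mid w' := by
    intro w hw w' hw' hne x hx hx'
    rcases hmemmid w x hx with ⟨hwu, hxuv⟩ | ⟨hwu, hxw⟩ <;>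
      rcases hmemmid w' x hx' with ⟨hwu', hxuv'⟩ | ⟨hwu', hxw'⟩
    · exact hne (hwu.trans hwu'.symm)
    · rcases hxuv with h3 | h3
      · exact hwu' (hxw'.symm.trans h3)
      · refine hvX ?_
        rw [h3.symm.trans hxw']
        exact hw'
    · rcases hxuv' with h3 | h3
      · exact hwu (hxw.symm.trans h3)
      · refine hvX ?_
        rw [h3.symm.trans hxw]
        exact hw
    · exact hne (hxw.symm.trans hxw')
  have hpathchain : ∀ w ∈ X, List.Chain B s (path w ++ [t]) := by
    intro w hw
    have c1 : List.Chain B s (g w ++ [w]) := (hg1 w hw).1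
    have c2 : List.Chain B (tgt w) ((h (tgt w)).reverse ++ [t]) :=
      chainFlip.1 (hh1 (tgt w) (htgtY w hw)).1
    by_cases hwu : w = u
    · have htv : tgt w = v := by simp [htgtdef, hwu]
      rw [htv] at c2
      have c3 : List.Chain B w (v :: ((h v).reverse ++ [t])) :=
        chainCons'.2 ⟨by rw [hwu]; exact huv, c2⟩
      have c4 := chainSplit'.2 ⟨c1, c3⟩
      have hpw : path w ++ [t] = g w ++ w :: (v :: ((h v).reverse ++ [t])) := by
        simp [hpathdef, hmiddef, htgtdef, hwu]
      rw [hpw]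
      exact c4
    · have htv : tgt w = w := by simp [htgtdef, hwu]
      rw [htv] at c2
      have c4 := chainSplit'.2 ⟨c1, c2⟩
      have hpw : path w ++ [t] = g w ++ w :: ((h w).reverse ++ [t]) := by
        simp [hpathdef, hmiddef, htgtdef, hwu]
      rw [hpw]
      exact c4
  have hpathsplit : ∀ w ∈ X, ∀ x ∈ path w,
      x ∈ g w ∨ x ∈ mid w ∨ x ∈ h (tgt w) := by
    intro w hw x hx
    rw [hpathdef] at hx
    rcases List.mem_append.1 hx with h' | h'
    · rcases List.mem_append.1 h' with h'' | h''
      · exact Or.inl h''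
      · exact Or.inr (Or.inl h'')
    · exact Or.inr (Or.inr (by simpa using h'))
  have hpathdw : ∀ w ∈ X, DWalkInternal B s t (path w) := by
    intro w hw
    refine ⟨hpathchain w hw, ?_⟩
    intro x hx
    rcases hpathsplit w hw x hx with h' | h' | h'
    · have := (hg1 w hw).2 x h'
      exact ⟨this.2.1, this.2.2.1⟩
    · exact hmidne w hw x h'
    · have := (hh1 (tgt w) (htgtY w hw)).2 x h'
      exact ⟨this.2.2.1, this.2.1⟩
  have hpathdisj : ∀ w ∈ X, ∀ w' ∈ X, w ≠ w' → ∀ x ∈ path w, x ∉ path w' := by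
    intro w hw w' hw' hne x hx hx'
    have hRg : ∀ a ∈ g w, a ∈ Rside B s t X := (hg1 w hw).2
    have hRg' : ∀ a ∈ g w', a ∈ Rside B s t X := (hg1 w' hw').2
    have hRh : ∀ a ∈ h (tgt w), a ∈ Rside (fun x y => B y x) t s Y :=
      (hh1 (tgt w) (htgtY w hw)).2
    have hRh' : ∀ a ∈ h (tgt w'), a ∈ Rside (fun x y => B y x) t s Y :=
      (hh1 (tgt w') (htgtY w' hw')).2
    rcases hpathsplit w hw x hx with h1 | h1 | h1 <;>
      rcases hpathsplit w' hw' x hx' with h2 | h2 | h2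
    · exact hg2 w hw w' hw' hne x h1 h2
    · rcases hmidXY w' hw' x h2 with h3 | h3
      · exact (hRg x h1).1 h3
      · exact hRsY x (hRg x h1) h3
    · exact hRsRt x (hRg x h1) (hRh' x h2)
    · rcases hmidXY w hw x h1 with h3 | h3
      · exact (hRg' x h2).1 h3
      · exact hRsY x (hRg' x h2) h3
    · exact hmiddisj w hw w' hw' hne x h1 h2
    · rcases hmidXY w hw x h1 with h3 | h3
      · exact hRtX x (hRh' x h2) h3
      · exact (hRh' x h2).1 h3
    · exact hRsRt x (hRg' x h2) (hRh x h1)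
    · rcases hmidXY w' hw' x h2 with h3 | h3
      · exact hRtX x (hRh x h1) h3
      · exact (hRh x h1).1 h3
    · exact hh2 (tgt w) (htgtY w hw) (tgt w') (htgtY w' hw')
        (htgtinj w hw w' hw' hne) x h1 h2
  have hmidself : ∀ w, ∃ m, m ∈ mid w ∧ m ∈ path w := by
    intro w
    have hmm : ∃ m, m ∈ mid w := by
      by_cases hwu : w = u
      · exact ⟨u, by simp [hmiddef, if_pos hwu]⟩
      · exact ⟨w, by simp [hmiddef, if_neg hwu]⟩
    obtain ⟨m, hm⟩ := hmm
    exact ⟨m, hm, by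
      rw [hpathdef]
      exact List.mem_append_left _ (List.mem_append_right _ hm)⟩
  set eX := X.equivFinOfCardEq hXcard with heXdef
  refine ⟨fun i => path (eX.symm i : V), ?_, ?_, ?_⟩
  · intro i j hij
    by_contra hne
    have hwne : ((eX.symm i : V)) ≠ ((eX.symm j : V)) := by
      intro he
      exact hne (by simpa using congrArg eX (Subtype.ext he :
        (eX.symm i : {x // x ∈ X}) = eX.symm j))
    obtain ⟨m, _, hm2⟩ := hmidself (eX.symm i : V)
    have hij' : path (eX.symm i : V) = path (eX.symm j : V) := hij
    exact hpathdisj _ (eX.symm i).2 _ (eX.symm j).2 hwne m hm2 (hij' ▸ hm2)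
  · intro i
    exact hpathdw _ (eX.symm i).2
  · intro i j hij x hx
    have hwne : ((eX.symm i : V)) ≠ ((eX.symm j : V)) := by
      intro he
      exact hij (by simpa using congrArg eX (Subtype.ext he :
        (eX.symm i : {x // x ∈ X}) = eX.symm j))
    exact hpathdisj _ (eX.symm i).2 _ (eX.symm j).2 hwne x hx

end Menger

/-- Menger's theorem, vertex version, for directed graphs: if `(s,t)` is not an edge,
the size of a minimum `(s,t)`-vertex cut equals the maximum number of internally
vertex-disjoint directed paths from `s` to `t`. -/
theorem stmt19 {V : Type*} [Fintype V] [DecidableEq V] (A : V → V → Prop)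
    (s t : V) (hst : s ≠ t) (hnoedge : ¬ A s t)
    (C : Finset V) (hs : s ∉ C) (ht : t ∉ C)
    (hcut : ¬ ∃ vs : List V, DWalkInternal A s t vs ∧ ∀ v ∈ vs, v ∉ C)
    (hmin : ∀ C' : Finset V, s ∉ C' → t ∉ C' →
      (¬ ∃ vs : List V, DWalkInternal A s t vs ∧ ∀ v ∈ vs, v ∉ C') →
      C.card ≤ C'.card) :
    C.card = nuConn A s t := by
  classical
  set N : Set ℕ := {n | ∃ f : Fin n → List V, Function.Injective f ∧
    (∀ i, DWalkInternal A s t (f i)) ∧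
    ∀ i j, i ≠ j → ∀ v, v ∈ f i → v ∉ f j} with hNdef
  have hub : ∀ n ∈ N, n ≤ C.card := by
    rintro n ⟨f, hfinj, hfw, hfd⟩
    have hc : ∀ i : Fin n, ∃ c, c ∈ f i ∧ c ∈ C := by
      intro i
      by_contra hcon
      push_neg at hcon
      exact hcut ⟨f i, hfw i, fun v hv hvC => hcon v hv hvC⟩
    choose c hc1 hc2 using hc
    have hcinj : Function.Injective (fun i => (⟨c i, hc2 i⟩ : {x // x ∈ C})) := by
      intro i j hij
      by_contra hne
      have : c i = c j := congrArg Subtype.val hij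
      exact hfd i j hne (c i) (hc1 i) (this ▸ hc1 j)
    have := Fintype.card_le_of_injective _ hcinj
    simpa [Fintype.card_coe] using this
  have hmem : C.card ∈ N := by
    obtain ⟨f, h1, h2, h3⟩ := mengerCore (edgeSet A).card A s t le_rfl hst hnoedge
      C.card hmin
    exact ⟨f, h1, h2, h3⟩
  have hbdd : BddAbove N := ⟨C.card, fun n hn => hub n hn⟩
  rw [nuConn]
  exact le_antisymm (le_csSup hbdd hmem) (csSup_le ⟨C.card, hmem⟩ hub)
end
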